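/- Let k be a positive integer and let (A,B) be a real 2k×2k pencil such that tA + uB is invertible for every (t,u) ∈ ℝ²\{(0,0)} (i.e., ρ(A,B) = (2k,2k)). Then the infimum over (A',B') ∈ B_{2k−1,2k−1} of ‖(A,B) − (A',B')‖ is not attained by any (A',B') ∈ B_{2k−1,2k−1}; that is, (A,B) has no best approximation in B_{2k−1,2k−1} in the norm topology. -/

import Mathlib

open Matrix

/-- Squared Frobenius norm of a matrix. -/
noncomputable def frobSq {m n : ℕ} (A : Matrix (Fin m) (Fin n) ℝ) : ℝ :=
  ∑ i, ∑ j, ‖A i j‖ ^ 2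

/-- Distance between two pencils induced by the norm
`‖(A, B)‖ = √(‖A‖_F² + ‖B‖_F²)`. -/
noncomputable def pdist {m n : ℕ}
    (p q : Matrix (Fin m) (Fin n) ℝ × Matrix (Fin m) (Fin n) ℝ) : ℝ :=
  Real.sqrt (frobSq (p.1 - q.1) + frobSq (p.2 - q.2))

/-- Membership in `B_{2k-1,2k-1}`: there exist two linearly independent pairs
`(t₁, u₁), (t₂, u₂)` with `rank (tᵢ A + uᵢ B) ≤ 2k - 1` for `i = 1, 2`. -/
def InBLowMinRanks {k : ℕ}
    (A B : Matrix (Fin (2 * k)) (Fin (2 * k)) ℝ) : Prop :=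
  ∃ t₁ u₁ t₂ u₂ : ℝ,
    LinearIndependent ℝ ![((t₁, u₁) : ℝ × ℝ), ((t₂, u₂) : ℝ × ℝ)] ∧
    (t₁ • A + u₁ • B).rank ≤ 2 * k - 1 ∧
    (t₂ • A + u₂ • B).rank ≤ 2 * k - 1

section Aux

variable {m n : ℕ}

lemma frobSq_eq_sum_sq (A : Matrix (Fin m) (Fin n) ℝ) :
    frobSq A = ∑ i, ∑ j, (A i j) ^ 2 := by
  simp [frobSq, Real.norm_eq_abs, sq_abs]

lemma frobSq_nonneg (A : Matrix (Fin m) (Fin n) ℝ) : 0 ≤ frobSq A := by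
  rw [frobSq_eq_sum_sq]
  exact Finset.sum_nonneg fun i _ => Finset.sum_nonneg fun j _ => sq_nonneg _

lemma frobSq_eq_zero {A : Matrix (Fin m) (Fin n) ℝ} (h : frobSq A = 0) : A = 0 := by
  rw [frobSq_eq_sum_sq] at h
  ext i j
  have h1 := (Finset.sum_eq_zero_iff_of_nonneg
    (fun i _ => Finset.sum_nonneg fun j _ => sq_nonneg (A i j))).1 h i (Finset.mem_univ i)
  have h2 := (Finset.sum_eq_zero_iff_of_nonneg (fun j _ => sq_nonneg (A i j))).1 h1 j
    (Finset.mem_univ j)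
  simpa using pow_eq_zero_iff (n := 2) (by norm_num) |>.1 h2

lemma frobSq_pos {A : Matrix (Fin m) (Fin n) ℝ} (h : A ≠ 0) : 0 < frobSq A := by
  rcases lt_or_eq_of_le (frobSq_nonneg A) with h' | h'
  · exact h'
  · exact absurd (frobSq_eq_zero h'.symm) h

lemma frobSq_smul (c : ℝ) (A : Matrix (Fin m) (Fin n) ℝ) :
    frobSq (c • A) = c ^ 2 * frobSq A := by
  simp only [frobSq_eq_sum_sq, Matrix.smul_apply, smul_eq_mul, mul_pow, Finset.mul_sum]

/-- Rotation identity for the Frobenius norm of pairs. -/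
lemma frobSq_rot (t u : ℝ) (X Y : Matrix (Fin m) (Fin n) ℝ) :
    frobSq (t • X + u • Y) + frobSq ((-u) • X + t • Y)
      = (t ^ 2 + u ^ 2) * (frobSq X + frobSq Y) := by
  simp only [frobSq_eq_sum_sq, Matrix.add_apply, Matrix.smul_apply, smul_eq_mul]
  rw [← Finset.sum_add_distrib, mul_add, Finset.mul_sum, Finset.mul_sum,
    ← Finset.sum_add_distrib]
  refine Finset.sum_congr rfl fun i _ => ?_
  rw [← Finset.sum_add_distrib, Finset.mul_sum, Finset.mul_sum, ← Finset.sum_add_distrib]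
  exact Finset.sum_congr rfl fun j _ => by ring

/-- Peter–Paul inequality for the Frobenius norm. -/
lemma frobSq_sub_le (c : ℝ) (hc : 0 < c) (X Y : Matrix (Fin m) (Fin n) ℝ) :
    frobSq (X - Y) ≤ (1 + c) * frobSq X + (1 + 1 / c) * frobSq Y := by
  simp only [frobSq_eq_sum_sq, Matrix.sub_apply, Finset.mul_sum, ← Finset.sum_add_distrib]
  refine Finset.sum_le_sum fun i _ => ?_
  refine Finset.sum_le_sum fun j _ => ?_
  set x := X i j; set y := Y i j
  have key : 0 ≤ c * x ^ 2 + 2 * x * y + y ^ 2 / c := by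
    have h1 : 0 ≤ (c * x + y) ^ 2 / c := div_nonneg (sq_nonneg _) hc.le
    have h2 : (c * x + y) ^ 2 / c = c * x ^ 2 + 2 * x * y + y ^ 2 / c := by
      field_simp; ring
    linarith [h2 ▸ h1]
  have hy : (1 + 1 / c) * y ^ 2 = y ^ 2 + y ^ 2 / c := by field_simp
  nlinarith [key]

lemma frobSq_add_le (X Y : Matrix (Fin m) (Fin n) ℝ) :
    frobSq (X + Y) ≤ 2 * frobSq X + 2 * frobSq Y := by
  simp only [frobSq_eq_sum_sq, Matrix.add_apply, Finset.mul_sum, ← Finset.sum_add_distrib]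
  refine Finset.sum_le_sum fun i _ => ?_
  refine Finset.sum_le_sum fun j _ => ?_
  nlinarith [sq_nonneg (X i j - Y i j)]

/-- Criterion for linear independence of two vectors in `ℝ × ℝ`. -/
lemma li2_iff (x y : ℝ × ℝ) :
    LinearIndependent ℝ ![x, y] ↔ x.1 * y.2 - x.2 * y.1 ≠ 0 := by
  rw [linearIndependent_fin2]
  constructor
  · rintro ⟨hy, hxy⟩ hD
    simp only [Matrix.cons_val_one, Matrix.head_cons, Matrix.cons_val_zero] at hy hxy
    rcases Prod.mk.injEq y.1 y.2 0 0 ▸ (by exact fun h => hy (by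
      ext <;> simp [h.1, h.2]) : ¬ (y.1 = 0 ∧ y.2 = 0)) with _
    by_cases hy1 : y.1 ≠ 0
    · exact hxy (x.1 / y.1) (by
        ext
        · simp [div_mul_cancel₀, hy1]
        · simp only [Prod.smul_snd, smul_eq_mul]
          field_simp
          linarith [hD])
    · push_neg at hy1
      have hy2 : y.2 ≠ 0 := by
        intro hy2; exact hy (by ext <;> simp [hy1, hy2])
      exact hxy (x.2 / y.2) (by
        ext
        · simp only [Prod.smul_fst, smul_eq_mul]
          field_simp
          nlinarith [hD]
        · simp [div_mul_cancel₀, hy2])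
  · intro hD
    refine ⟨?_, ?_⟩
    · simp only [Matrix.cons_val_one, Matrix.head_cons, Matrix.cons_val_zero]
      intro h
      rw [h] at hD
      simp at hD
    · intro a ha
      simp only [Matrix.cons_val_one, Matrix.head_cons, Matrix.cons_val_zero] at ha
      apply hD
      rw [← ha]
      simp only [Prod.smul_fst, Prod.smul_snd, smul_eq_mul]
      ring

end Aux


section DetRank

variable {k : ℕ}

lemma det_eq_zero_of_rank_le (hk : 0 < k) {M : Matrix (Fin (2 * k)) (Fin (2 * k)) ℝ}
    (h : M.rank ≤ 2 * k - 1) : M.det = 0 := by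
  by_contra hd
  have : IsUnit M := M.isUnit_iff_isUnit_det.2 (isUnit_iff_ne_zero.2 hd)
  have := Matrix.rank_of_isUnit M this
  rw [Fintype.card_fin] at this
  omega

lemma rank_le_of_det_eq_zero (hk : 0 < k) {M : Matrix (Fin (2 * k)) (Fin (2 * k)) ℝ}
    (h : M.det = 0) : M.rank ≤ 2 * k - 1 := by
  obtain ⟨v, hv, hMv⟩ := (Matrix.exists_mulVec_eq_zero_iff).2 h
  have hrk : M.rank + Module.finrank ℝ (LinearMap.ker M.mulVecLin) = 2 * k := by
    have h1 := LinearMap.finrank_range_add_finrank_ker M.mulVecLin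
    rw [Module.finrank_pi, Fintype.card_fin] at h1
    exact h1
  have hker : Module.finrank ℝ (LinearMap.ker M.mulVecLin) ≠ 0 := by
    intro h0
    have : LinearMap.ker M.mulVecLin = ⊥ := Submodule.finrank_eq_zero.1 h0
    have hvmem : v ∈ LinearMap.ker M.mulVecLin := by
      rw [LinearMap.mem_ker, Matrix.mulVecLin_apply]; exact hMv
    rw [this, Submodule.mem_bot] at hvmem
    exact hv hvmem
  omega

end DetRank

section VecMulVec

variable {N : ℕ}

lemma vecMulVec_mulVec (w v x : Fin N → ℝ) :
    (vecMulVec w v) *ᵥ x = (v ⬝ᵥ x) • w := by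
  ext i
  simp only [Matrix.mulVec, dotProduct, vecMulVec_apply, Pi.smul_apply, smul_eq_mul]
  rw [Finset.sum_mul]
  exact Finset.sum_congr rfl fun j _ => by ring

lemma smul_vecMulVec (c : ℝ) (w v : Fin N → ℝ) :
    vecMulVec (c • w) v = c • vecMulVec w v := by
  ext i j
  simp [vecMulVec_apply, mul_assoc]

/-- Key lemma: scaling a rank-one update along the kernel scales the determinant linearly. -/
lemma det_add_smul_vecMulVec (M : Matrix (Fin N) (Fin N) ℝ) (v w : Fin N → ℝ)
    (hv : v ≠ 0) (hMv : M *ᵥ v = 0) (s : ℝ) :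
    (M + s • vecMulVec w v).det = s * (M + vecMulVec w v).det := by
  have hvv : v ⬝ᵥ v ≠ 0 := fun h => hv (dotProduct_self_eq_zero.1 h)
  set c : ℝ := (s - 1) / (v ⬝ᵥ v) with hc
  set D : Matrix (Fin N) (Fin N) ℝ := 1 + c • vecMulVec v v with hD
  have hrow : ∀ i, ∑ l, M i l * v l = 0 := by
    intro i
    have := congrFun hMv i
    simpa [Matrix.mulVec, dotProduct] using this
  have h1 : (M + vecMulVec w v) * D = M + s • vecMulVec w v := by
    ext i j
    simp only [hD, Matrix.mul_apply, Matrix.add_apply, Matrix.smul_apply, Matrix.one_apply,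
      vecMulVec_apply, smul_eq_mul, mul_add, add_mul, mul_ite, mul_one, mul_zero,
      Finset.sum_add_distrib, Finset.sum_ite_eq', Finset.mem_univ, if_true]
    have e1 : ∑ l, M i l * (c * (v l * v j)) = c * v j * ∑ l, M i l * v l := by
      rw [Finset.mul_sum]
      exact Finset.sum_congr rfl fun l _ => by ring
    have e2 : ∑ l, w i * v l * (c * (v l * v j)) = c * v j * w i * ∑ l, v l * v l := by
      rw [Finset.mul_sum]
      exact Finset.sum_congr rfl fun l _ => by ring
    rw [e1, e2, hrow i]
    have hdot : (v ⬝ᵥ v) = ∑ l, v l * v l := rfl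
    have : c * (v ⬝ᵥ v) = s - 1 := by
      rw [hc]; field_simp
    rw [← hdot]
    linear_combination (w i * v j) * this
  have h2 : D.det = s := by
    have hcol : D = 1 + replicateCol Unit (c • v) * replicateRow Unit v := by
      rw [hD]
      congr 1
      rw [← smul_vecMulVec]
      ext i j
      simp [vecMulVec_apply, Matrix.mul_apply, Matrix.replicateCol, Matrix.replicateRow]
    rw [hcol, det_one_add_replicateCol_mul_replicateRow]
    have : v ⬝ᵥ (c • v) = c * (v ⬝ᵥ v) := by
      simp [dotProduct, Finset.mul_sum]
      exact Finset.sum_congr rfl fun l _ => by ring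
    rw [this, hc]
    field_simp
    ring
  calc (M + s • vecMulVec w v).det = ((M + vecMulVec w v) * D).det := by rw [h1]
    _ = (M + vecMulVec w v).det * D.det := det_mul _ _
    _ = s * (M + vecMulVec w v).det := by rw [h2]; ring

end VecMulVec



section LemmaA

variable {N : ℕ}

lemma corank_reduce : ∀ (r : ℕ) (M : Matrix (Fin N) (Fin N) ℝ), M.det = 0 →
    Module.finrank ℝ (LinearMap.ker M.mulVecLin) = r → ∀ ρ : ℝ, 0 < ρ →
    ∃ Δ v w, frobSq Δ < ρ ∧ (M + Δ) *ᵥ v = 0 ∧ v ≠ 0 ∧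
      (M + Δ + vecMulVec w v).det ≠ 0 := by
  intro r
  induction r using Nat.strong_induction_on with
  | _ r IH =>
    intro M hdet hr ρ hρ
    by_cases hbig : ∃ v w, v ≠ 0 ∧ M *ᵥ v = 0 ∧ (M + vecMulVec w v).det ≠ 0
    · obtain ⟨v, w, hv, hMv, hd⟩ := hbig
      refine ⟨0, v, w, by simpa [frobSq] using hρ, by simpa using hMv, hv, by simpa using hd⟩
    · push_neg at hbig
      obtain ⟨v, hv, hMv⟩ := (Matrix.exists_mulVec_eq_zero_iff).2 hdet
      -- M is not injective hence not surjective
      have hninj : ¬ Function.Injective M.mulVecLin := by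
        intro hinj
        apply hv
        apply hinj
        simp [Matrix.mulVecLin_apply, hMv]
      have hnsurj : ¬ Function.Surjective M.mulVecLin := fun hs =>
        hninj ((LinearMap.injective_iff_surjective_of_finrank_eq_finrank rfl).2 hs)
      have hnr : LinearMap.range M.mulVecLin ≠ (⊤ : Submodule ℝ (Fin N → ℝ)) := by
        intro h
        exact hnsurj (LinearMap.range_eq_top.1 h)
      obtain ⟨w, -, hw⟩ :=
        SetLike.exists_of_lt
          ((lt_top_iff_ne_top (α := Submodule ℝ (Fin N → ℝ))).2 hnr)
      have hwne : w ≠ 0 := fun h => hw (by rw [h]; exact Submodule.zero_mem _)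
      have hwR : ∀ x, M *ᵥ x ≠ w := by
        intro x hx
        exact hw (LinearMap.mem_range.2 ⟨x, by simpa [Matrix.mulVecLin_apply] using hx⟩)
      set F : ℝ := frobSq (vecMulVec w v) with hF
      have hFnn : 0 ≤ F := frobSq_nonneg _
      set ε : ℝ := Real.sqrt (ρ / (8 * (F + 1))) with hε
      have hεpos : 0 < ε := Real.sqrt_pos.2 (by positivity)
      have hε2 : ε ^ 2 = ρ / (8 * (F + 1)) := Real.sq_sqrt (by positivity)
      set M₁ : Matrix (Fin N) (Fin N) ℝ := M + vecMulVec (ε • w) v with hM₁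
      have hdet1 : M₁.det = 0 := by
        by_contra hne
        exact hne (hbig v (ε • w) hv hMv)
      -- kernel of M₁
      have hker_le : LinearMap.ker M₁.mulVecLin ≤ LinearMap.ker M.mulVecLin := by
        intro x hx
        rw [LinearMap.mem_ker, Matrix.mulVecLin_apply] at hx ⊢
        rw [hM₁, Matrix.add_mulVec, vecMulVec_mulVec] at hx
        by_cases hdot : v ⬝ᵥ x = 0
        · simpa [hdot] using hx
        · exfalso
          have haε : (v ⬝ᵥ x) * ε ≠ 0 := mul_ne_zero hdot (ne_of_gt hεpos)
          have hx' : M *ᵥ x = -(((v ⬝ᵥ x) * ε) • w) := by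
            rw [eq_neg_iff_add_eq_zero, ← smul_smul]
            exact hx
          apply hwR ((-((v ⬝ᵥ x) * ε)⁻¹) • x)
          rw [Matrix.mulVec_smul, hx', smul_neg, neg_smul, neg_neg, smul_smul,
            inv_mul_cancel₀ haε, one_smul]
      have hvker : v ∈ LinearMap.ker M.mulVecLin := by
        rw [LinearMap.mem_ker, Matrix.mulVecLin_apply]; exact hMv
      have hvnker : v ∉ LinearMap.ker M₁.mulVecLin := by
        rw [LinearMap.mem_ker, Matrix.mulVecLin_apply, hM₁, Matrix.add_mulVec, hMv,
          vecMulVec_mulVec]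
        intro h
        have hvv : v ⬝ᵥ v ≠ 0 := fun h' => hv (dotProduct_self_eq_zero.1 h')
        rw [zero_add, smul_smul] at h
        have := smul_eq_zero.1 h
        rcases this with h' | h'
        · exact (mul_ne_zero hvv (ne_of_gt hεpos)) h'
        · exact hwne h'
      have hlt : LinearMap.ker M₁.mulVecLin < LinearMap.ker M.mulVecLin :=
        lt_of_le_of_ne hker_le (fun h => hvnker (h ▸ hvker))
      have hfr : Module.finrank ℝ (LinearMap.ker M₁.mulVecLin) < r :=
        hr ▸ Submodule.finrank_lt_finrank_of_lt hlt
      obtain ⟨Δ', v', w', hsize', hker', hne', hdet'⟩ :=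
        IH _ hfr M₁ hdet1 rfl (ρ / 4) (by positivity)
      refine ⟨vecMulVec (ε • w) v + Δ', v', w', ?_, ?_, hne', ?_⟩
      · calc frobSq (vecMulVec (ε • w) v + Δ')
            ≤ 2 * frobSq (vecMulVec (ε • w) v) + 2 * frobSq Δ' := frobSq_add_le _ _
          _ = 2 * (ε ^ 2 * F) + 2 * frobSq Δ' := by rw [smul_vecMulVec, frobSq_smul]
          _ < 2 * (ε ^ 2 * F) + 2 * (ρ / 4) := by linarith
          _ ≤ 2 * (ρ / 8) + 2 * (ρ / 4) := by
              have : ε ^ 2 * F ≤ ρ / 8 := by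
                rw [hε2]
                rw [div_mul_eq_mul_div, div_le_div_iff₀ (by positivity) (by norm_num)]
                nlinarith
              linarith
          _ < ρ := by linarith
      · rw [← add_assoc, ← hM₁]; exact hker'
      · rw [← add_assoc, ← hM₁]; exact hdet'

lemma exists_small_det_target (M : Matrix (Fin N) (Fin N) ℝ) (hdet : M.det = 0)
    (β ρ : ℝ) (hβ : β ≠ 0) (hρ : 0 < ρ) :
    ∃ Δ, frobSq Δ < ρ ∧ (M + Δ).det * β < 0 := by
  obtain ⟨Δ₀, v, w, h₀, hv0, hvne, hdne⟩ :=
    corank_reduce (Module.finrank ℝ (LinearMap.ker M.mulVecLin)) M hdet rfl (ρ / 4)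
      (by positivity)
  set c : ℝ := (M + Δ₀ + vecMulVec w v).det with hc
  have hcne : c ≠ 0 := hdne
  set Fw : ℝ := frobSq (vecMulVec w v) with hFw
  have hFnn : 0 ≤ Fw := frobSq_nonneg _
  set η : ℝ := Real.sqrt (ρ / (8 * (β * c) ^ 2 * (Fw + 1))) with hη
  have hbc : (β * c) ^ 2 > 0 := by positivity
  have hηpos : 0 < η := Real.sqrt_pos.2 (by positivity)
  have hη2 : η ^ 2 = ρ / (8 * (β * c) ^ 2 * (Fw + 1)) := Real.sq_sqrt (by positivity)
  set s : ℝ := -(β * c) * η with hs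
  refine ⟨Δ₀ + s • vecMulVec w v, ?_, ?_⟩
  · calc frobSq (Δ₀ + s • vecMulVec w v)
        ≤ 2 * frobSq Δ₀ + 2 * frobSq (s • vecMulVec w v) := frobSq_add_le _ _
      _ = 2 * frobSq Δ₀ + 2 * (s ^ 2 * Fw) := by rw [frobSq_smul]
      _ < 2 * (ρ / 4) + 2 * (s ^ 2 * Fw) := by linarith
      _ ≤ 2 * (ρ / 4) + 2 * (ρ / 8) := by
          have hs2 : s ^ 2 = (β * c) ^ 2 * η ^ 2 := by rw [hs]; ring
          have : s ^ 2 * Fw ≤ ρ / 8 := by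
            rw [hs2, hη2]
            have heq : (β * c) ^ 2 * (ρ / (8 * (β * c) ^ 2 * (Fw + 1))) * Fw
                = ρ * Fw / (8 * (Fw + 1)) := by
              field_simp
            rw [heq, div_le_div_iff₀ (by positivity) (by norm_num)]
            nlinarith
          linarith
      _ < ρ := by linarith
  · have key : (M + (Δ₀ + s • vecMulVec w v)).det = s * c := by
      rw [← add_assoc]
      exact det_add_smul_vecMulVec (M + Δ₀) v w hvne hv0 s
    rw [key, hs]
    have : -(β * c) * η * c * β = -(η * (β * c) ^ 2) := by ring
    rw [this]
    have : (0:ℝ) < η * (β * c) ^ 2 := by positivity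
    linarith



section IVT

variable {k : ℕ}

/-- If the pencil determinant vanishes at a direction and its perpendicular. -/
lemma inB_of_two_zeros (hk : 0 < k) (X Y : Matrix (Fin (2 * k)) (Fin (2 * k)) ℝ)
    (t u : ℝ) (he : t ^ 2 + u ^ 2 = 1)
    (h1 : (t • X + u • Y).det = 0) (h2 : ((-u) • X + t • Y).det = 0) :
    InBLowMinRanks X Y := by
  refine ⟨t, u, -u, t, ?_, rank_le_of_det_eq_zero hk h1, rank_le_of_det_eq_zero hk h2⟩
  rw [li2_iff]
  simp only
  intro h
  rw [show t * t - u * -u = t ^ 2 + u ^ 2 by ring, he] at h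
  norm_num at h

/-- If the pencil determinant has opposite signs at a direction and its perpendicular,
then (even size!) there are two independent real singular directions. -/
lemma inB_of_opposite_signs (hk : 0 < k) (X Y : Matrix (Fin (2 * k)) (Fin (2 * k)) ℝ)
    (t u : ℝ) (he : t ^ 2 + u ^ 2 = 1)
    (hsign : (t • X + u • Y).det * ((-u) • X + t • Y).det < 0) :
    InBLowMinRanks X Y := by
  set q₁ : ℝ := (t • X + u • Y).det with hq₁
  set q₂ : ℝ := ((-u) • X + t • Y).det with hq₂
  -- the two paths
  set g : ℝ → ℝ := fun τ =>
    ((((1 - τ) * t - τ * u) • X + ((1 - τ) * u + τ * t) • Y)).det with hg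
  set g' : ℝ → ℝ := fun τ =>
    ((((1 - τ) * t + τ * u) • X + ((1 - τ) * u - τ * t) • Y)).det with hg'
  have hgc : Continuous g := by
    apply Continuous.matrix_det
    exact ((continuous_const.sub continuous_id).mul continuous_const |>.sub
      (continuous_id.mul continuous_const)).smul continuous_const |>.add
      (((continuous_const.sub continuous_id).mul continuous_const |>.add
        (continuous_id.mul continuous_const)).smul continuous_const)
  have hgc' : Continuous g' := by
    apply Continuous.matrix_det
    exact ((continuous_const.sub continuous_id).mul continuous_const |>.add
      (continuous_id.mul continuous_const)).smul continuous_const |>.add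
      (((continuous_const.sub continuous_id).mul continuous_const |>.sub
        (continuous_id.mul continuous_const)).smul continuous_const)
  have hg0 : g 0 = q₁ := by simp [hg, hq₁]
  have hg1 : g 1 = q₂ := by simp [hg, hq₂]
  have hg'0 : g' 0 = q₁ := by simp [hg', hq₁]
  have hg'1 : g' 1 = q₂ := by
    have : ((1 - 1) * t + 1 * u) • X + ((1 - 1) * u - 1 * t) • Y
        = (-1 : ℝ) • ((-u) • X + t • Y) := by module
    simp only [hg', this, Matrix.det_smul, Fintype.card_fin]
    rw [show ((-1 : ℝ)) ^ (2 * k) = 1 from Even.neg_one_pow (even_two_mul k)]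
    rw [one_mul]
  -- find roots on both paths
  obtain ⟨τ₁, hτ₁mem, hτ₁⟩ : ∃ τ ∈ Set.Ioo (0:ℝ) 1, g τ = 0 := by
    rcases mul_neg_iff.1 hsign with ⟨hpos, hneg⟩ | ⟨hneg, hpos⟩
    · have := intermediate_value_Ioo' (by norm_num : (0:ℝ) ≤ 1) hgc.continuousOn
        (a := 0) (b := 1)
      have h0 : (0:ℝ) ∈ Set.Ioo (g 1) (g 0) := by rw [hg0, hg1]; exact ⟨hneg, hpos⟩
      obtain ⟨τ, hτ, hτ0⟩ := this h0
      exact ⟨τ, hτ, hτ0⟩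
    · have := intermediate_value_Ioo (by norm_num : (0:ℝ) ≤ 1) hgc.continuousOn
        (a := 0) (b := 1)
      have h0 : (0:ℝ) ∈ Set.Ioo (g 0) (g 1) := by rw [hg0, hg1]; exact ⟨hneg, hpos⟩
      obtain ⟨τ, hτ, hτ0⟩ := this h0
      exact ⟨τ, hτ, hτ0⟩
  obtain ⟨τ₂, hτ₂mem, hτ₂⟩ : ∃ τ ∈ Set.Ioo (0:ℝ) 1, g' τ = 0 := by
    rcases mul_neg_iff.1 hsign with ⟨hpos, hneg⟩ | ⟨hneg, hpos⟩
    · have := intermediate_value_Ioo' (by norm_num : (0:ℝ) ≤ 1) hgc'.continuousOn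
        (a := 0) (b := 1)
      have h0 : (0:ℝ) ∈ Set.Ioo (g' 1) (g' 0) := by rw [hg'0, hg'1]; exact ⟨hneg, hpos⟩
      obtain ⟨τ, hτ, hτ0⟩ := this h0
      exact ⟨τ, hτ, hτ0⟩
    · have := intermediate_value_Ioo (by norm_num : (0:ℝ) ≤ 1) hgc'.continuousOn
        (a := 0) (b := 1)
      have h0 : (0:ℝ) ∈ Set.Ioo (g' 0) (g' 1) := by rw [hg'0, hg'1]; exact ⟨hneg, hpos⟩
      obtain ⟨τ, hτ, hτ0⟩ := this h0
      exact ⟨τ, hτ, hτ0⟩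
  obtain ⟨hτ₁0, hτ₁1⟩ := hτ₁mem
  obtain ⟨hτ₂0, hτ₂1⟩ := hτ₂mem
  refine ⟨(1 - τ₁) * t - τ₁ * u, (1 - τ₁) * u + τ₁ * t,
    (1 - τ₂) * t + τ₂ * u, (1 - τ₂) * u - τ₂ * t, ?_,
    rank_le_of_det_eq_zero hk hτ₁, rank_le_of_det_eq_zero hk hτ₂⟩
  rw [li2_iff]
  simp only
  have key : ((1 - τ₁) * t - τ₁ * u) * ((1 - τ₂) * u - τ₂ * t)
      - ((1 - τ₁) * u + τ₁ * t) * ((1 - τ₂) * t + τ₂ * u)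
      = -(((1 - τ₁) * τ₂ + τ₁ * (1 - τ₂)) * (t ^ 2 + u ^ 2)) := by ring
  rw [key, he, mul_one]
  have h1 : 0 < (1 - τ₁) * τ₂ := mul_pos (by linarith) hτ₂0
  have h2 : 0 < τ₁ * (1 - τ₂) := mul_pos hτ₁0 (by linarith)
  intro h
  have : (1 - τ₁) * τ₂ + τ₁ * (1 - τ₂) = 0 := by linarith [neg_eq_zero.1 h]
  linarith

end IVT



section Improve

variable {k : ℕ}

lemma improve (hk : 0 < k) (A' B' G H : Matrix (Fin (2 * k)) (Fin (2 * k)) ℝ)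
    (t u : ℝ) (he : t ^ 2 + u ^ 2 = 1)
    (hdetP : (t • A' + u • B').det = 0)
    (hW : (-u) • G + t • H ≠ 0) :
    ∃ X Y, InBLowMinRanks X Y ∧
      frobSq (A' + G - X) + frobSq (B' + H - Y) < frobSq G + frobSq H := by
  set Ge : Matrix (Fin (2 * k)) (Fin (2 * k)) ℝ := t • G + u • H with hGe
  set W : Matrix (Fin (2 * k)) (Fin (2 * k)) ℝ := (-u) • G + t • H with hWdef
  set P : Matrix (Fin (2 * k)) (Fin (2 * k)) ℝ := t • A' + u • B' with hP
  set Pp : Matrix (Fin (2 * k)) (Fin (2 * k)) ℝ := (-u) • A' + t • B' with hPp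
  set R : Matrix (Fin (2 * k)) (Fin (2 * k)) ℝ := Pp + (2⁻¹ : ℝ) • W with hR
  set F : ℝ := frobSq W with hF
  set sG : ℝ := frobSq Ge with hsG
  have hFpos : 0 < F := frobSq_pos hW
  have hsGnn : 0 ≤ sG := frobSq_nonneg _
  have hsum : sG + F = frobSq G + frobSq H := by
    have h := frobSq_rot t u G H
    rw [he, one_mul] at h
    exact h
  set c : ℝ := F / (4 * (sG + 1)) with hc
  have hcpos : 0 < c := by positivity
  set ρ : ℝ := F ^ 2 / (4 * (F + 4 * (sG + 1))) with hρ
  have hρpos : 0 < ρ := by positivity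
  obtain ⟨Δ, hΔρ, hmem⟩ : ∃ Δ, frobSq Δ < ρ ∧
      InBLowMinRanks (t • (P + Δ) + (-u) • R) (u • (P + Δ) + t • R) := by
    by_cases hβ : R.det = 0
    · refine ⟨0, by simpa [frobSq] using hρpos, ?_⟩
      apply inB_of_two_zeros hk _ _ t u he
      · have hid : t • (t • (P + 0) + (-u) • R) + u • (u • (P + 0) + t • R)
            = (t ^ 2 + u ^ 2) • P := by module
        rw [hid, he, one_smul]
        exact hdetP
      · have hid : (-u) • (t • (P + 0) + (-u) • R) + t • (u • (P + 0) + t • R)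
            = (t ^ 2 + u ^ 2) • R := by module
        rw [hid, he, one_smul]
        exact hβ
    · obtain ⟨Δ, h1, h2⟩ := exists_small_det_target P hdetP R.det ρ hβ hρpos
      refine ⟨Δ, h1, ?_⟩
      apply inB_of_opposite_signs hk _ _ t u he
      have e1 : t • (t • (P + Δ) + (-u) • R) + u • (u • (P + Δ) + t • R)
          = (t ^ 2 + u ^ 2) • (P + Δ) := by module
      have e2 : (-u) • (t • (P + Δ) + (-u) • R) + t • (u • (P + Δ) + t • R)
          = (t ^ 2 + u ^ 2) • R := by module
      rw [e1, e2, he, one_smul, one_smul]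
      exact h2
  refine ⟨t • (P + Δ) + (-u) • R, u • (P + Δ) + t • R, hmem, ?_⟩
  have hAX : A' + G - (t • (P + Δ) + (-u) • R)
      = t • (Ge - Δ) + (-u) • ((2⁻¹ : ℝ) • W) + (1 - (t ^ 2 + u ^ 2)) • (A' + G) := by
    rw [hP, hR, hPp, hWdef, hGe]
    module
  have hBY : B' + H - (u • (P + Δ) + t • R)
      = u • (Ge - Δ) + t • ((2⁻¹ : ℝ) • W) + (1 - (t ^ 2 + u ^ 2)) • (B' + H) := by
    rw [hP, hR, hPp, hWdef, hGe]
    module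
  rw [he] at hAX hBY
  simp only [sub_self, zero_smul, add_zero] at hAX hBY
  rw [hAX, hBY]
  have hrot := frobSq_rot t (-u) (Ge - Δ) ((2⁻¹ : ℝ) • W)
  simp only [neg_neg] at hrot
  rw [show t ^ 2 + (-u) ^ 2 = 1 by linear_combination he, one_mul] at hrot
  rw [hrot]
  -- now bound
  have hWq : frobSq ((2⁻¹ : ℝ) • W) = 4⁻¹ * F := by
    rw [frobSq_smul]
    norm_num
    exact hF.symm
  have hPP : frobSq (Ge - Δ) ≤ (1 + c) * sG + (1 + 1 / c) * frobSq Δ :=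
    frobSq_sub_le c hcpos Ge Δ
  have hcsG : c * sG ≤ F / 4 := by
    rw [hc, div_mul_eq_mul_div, div_le_div_iff₀ (by positivity) (by norm_num)]
    nlinarith
  have hcρ : (1 + 1 / c) * ρ = F / 4 := by
    rw [hc, hρ]
    field_simp
  have hΔbound : (1 + 1 / c) * frobSq Δ < F / 4 := by
    rw [← hcρ]
    have h1c : 0 < 1 + 1 / c := by positivity
    exact (mul_lt_mul_iff_right₀ h1c).2 hΔρ
  rw [hWq, ← hsum]
  nlinarith [hPP, hΔbound, hcsG]

end Improve



/-- If `(A, B)` is a real `2k × 2k` pencil with `t A + u B` invertible for all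
`(t, u) ≠ (0, 0)` (i.e. `ρ(A, B) = (2k, 2k)`), then the infimum of
`‖(A, B) - (A', B')‖` over `(A', B') ∈ B_{2k-1,2k-1}` is not attained: `(A, B)`
has no best approximation in `B_{2k-1,2k-1}` in the norm topology. -/
theorem no_best_approx_full_minRanks (k : ℕ) (hk : 0 < k)
    (A B : Matrix (Fin (2 * k)) (Fin (2 * k)) ℝ)
    (hC : ∀ t u : ℝ, (t, u) ≠ 0 → IsUnit (t • A + u • B).det) :
    ¬ ∃ A' B' : Matrix (Fin (2 * k)) (Fin (2 * k)) ℝ,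
      InBLowMinRanks A' B' ∧
      ∀ C D : Matrix (Fin (2 * k)) (Fin (2 * k)) ℝ,
        InBLowMinRanks C D →
        pdist (A, B) (A', B') ≤ pdist (A, B) (C, D) := by
  rintro ⟨A', B', ⟨t₁, u₁, t₂, u₂, hLI, hr1, hr2⟩, hmin⟩
  set G : Matrix (Fin (2 * k)) (Fin (2 * k)) ℝ := A - A' with hG
  set H : Matrix (Fin (2 * k)) (Fin (2 * k)) ℝ := B - B' with hH
  have hd1 : (t₁ • A' + u₁ • B').det = 0 := det_eq_zero_of_rank_le hk hr1
  have hd2 : (t₂ • A' + u₂ • B').det = 0 := det_eq_zero_of_rank_le hk hr2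
  have hδ : t₁ * u₂ - u₁ * t₂ ≠ 0 := by
    have h := (li2_iff (t₁, u₁) (t₂, u₂)).1 hLI
    simpa using h
  have hne1 : ((t₁, u₁) : ℝ × ℝ) ≠ 0 := by
    intro h
    apply hδ
    have h1 : t₁ = 0 := congrArg Prod.fst h
    have h2 : u₁ = 0 := congrArg Prod.snd h
    rw [h1, h2]
    ring
  have hne2 : ((t₂, u₂) : ℝ × ℝ) ≠ 0 := by
    intro h
    apply hδ
    have h1 : t₂ = 0 := congrArg Prod.fst h
    have h2 : u₂ = 0 := congrArg Prod.snd h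
    rw [h1, h2]
    ring
  have hGH : ¬(G = 0 ∧ H = 0) := by
    rintro ⟨hG0, hH0⟩
    have hA : A = A' := sub_eq_zero.1 (hG ▸ hG0)
    have hB : B = B' := sub_eq_zero.1 (hH ▸ hH0)
    have hzero : (t₁ • A + u₁ • B).det = 0 := by rw [hA, hB]; exact hd1
    have hunit := hC t₁ u₁ hne1
    rw [hzero] at hunit
    exact (isUnit_iff_ne_zero.1 hunit) rfl
  have hperp : ((-u₁) • G + t₁ • H ≠ 0) ∨ ((-u₂) • G + t₂ • H ≠ 0) := by
    by_contra hcon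
    push_neg at hcon
    obtain ⟨h1, h2⟩ := hcon
    apply hGH
    have hGz : (t₁ * u₂ - u₁ * t₂) • G
        = t₂ • ((-u₁) • G + t₁ • H) - t₁ • ((-u₂) • G + t₂ • H) := by module
    have hHz : (t₁ * u₂ - u₁ * t₂) • H
        = u₂ • ((-u₁) • G + t₁ • H) - u₁ • ((-u₂) • G + t₂ • H) := by module
    rw [h1, h2] at hGz hHz
    simp only [smul_zero, sub_zero] at hGz hHz
    constructor
    · rcases smul_eq_zero.1 hGz with h | h
      · exact absurd h hδ
      · exact h
    · rcases smul_eq_zero.1 hHz with h | h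
      · exact absurd h hδ
      · exact h
  have hgood : ∃ t₀ u₀ : ℝ, t₀ ^ 2 + u₀ ^ 2 = 1 ∧ (t₀ • A' + u₀ • B').det = 0 ∧
      (-u₀) • G + t₀ • H ≠ 0 := by
    have key : ∀ t u : ℝ, ((t, u) : ℝ × ℝ) ≠ 0 → (t • A' + u • B').det = 0 →
        (-u) • G + t • H ≠ 0 →
        ∃ t₀ u₀ : ℝ, t₀ ^ 2 + u₀ ^ 2 = 1 ∧ (t₀ • A' + u₀ • B').det = 0 ∧
          (-u₀) • G + t₀ • H ≠ 0 := by
      intro t u hne hdet hp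
      have htu : t ≠ 0 ∨ u ≠ 0 := by
        by_contra hcc
        push_neg at hcc
        exact hne (by rw [hcc.1, hcc.2]; rfl)
      have hpos : 0 < t ^ 2 + u ^ 2 := by
        rcases htu with h | h
        · have h1 : 0 < t ^ 2 := lt_of_le_of_ne (sq_nonneg t) (Ne.symm (pow_ne_zero 2 h))
          nlinarith [sq_nonneg u]
        · have h1 : 0 < u ^ 2 := lt_of_le_of_ne (sq_nonneg u) (Ne.symm (pow_ne_zero 2 h))
          nlinarith [sq_nonneg t]
      set cc : ℝ := Real.sqrt (t ^ 2 + u ^ 2) with hcc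
      have hccpos : 0 < cc := Real.sqrt_pos.2 hpos
      have hcc2 : cc ^ 2 = t ^ 2 + u ^ 2 := Real.sq_sqrt hpos.le
      refine ⟨t / cc, u / cc, ?_, ?_, ?_⟩
      · rw [div_pow, div_pow, ← add_div, hcc2, div_self (ne_of_gt hpos)]
      · have hid : (t / cc) • A' + (u / cc) • B' = cc⁻¹ • (t • A' + u • B') := by
          rw [smul_add, smul_smul, smul_smul, div_eq_inv_mul, div_eq_inv_mul]
        rw [hid, Matrix.det_smul, hdet, mul_zero]
      · have hid : (-(u / cc)) • G + (t / cc) • H = cc⁻¹ • ((-u) • G + t • H) := by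
          match_scalars <;> ring
        rw [hid]
        exact smul_ne_zero (inv_ne_zero (ne_of_gt hccpos)) hp
    rcases hperp with hp | hp
    · exact key t₁ u₁ hne1 hd1 hp
    · exact key t₂ u₂ hne2 hd2 hp
  obtain ⟨t₀, u₀, hnorm, hdet0, hWne⟩ := hgood
  obtain ⟨X, Y, hmemXY, hlt⟩ := improve hk A' B' G H t₀ u₀ hnorm hdet0 hWne
  have hA : A' + G = A := by rw [hG]; abel
  have hB : B' + H = B := by rw [hH]; abel
  rw [hA, hB] at hlt
  have hle := hmin X Y hmemXY
  have hstrict : pdist (A, B) (X, Y) < pdist (A, B) (A', B') := by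
    unfold pdist
    simp only
    apply Real.sqrt_lt_sqrt (add_nonneg (frobSq_nonneg _) (frobSq_nonneg _))
    exact hlt
  linarith
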